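/- arXiv:math/0608009 — 4 statements merged into one kernel-verified Lean document; each statement's English description precedes it below -/
import Mathlib

section
/- Let R be a commutative ring in which n! is invertible, and let φ be an R-algebra endomorphism of R[X_1,...,X_{2n}] which is symplectic (i.e., the pullback of the canonical symplectic form ω by the linear map with matrix the transpose of the Jacobian of φ equals ω). Then det(Jφ) = 1. -/
open MvPolynomial Matrix

/-- The canonical Poisson bracket on `R[X_1,...,X_{2n}]`, with the first `n`
variables indexed by `Sum.inl` and the last `n` by `Sum.inr`. -/
noncomputable def poissonBracket {R : Type*} [CommRing R] {n : ℕ}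
    (f g : MvPolynomial (Fin n ⊕ Fin n) R) : MvPolynomial (Fin n ⊕ Fin n) R :=
  ∑ i : Fin n,
    (pderiv (Sum.inl i) f * pderiv (Sum.inr i) g
      - pderiv (Sum.inr i) f * pderiv (Sum.inl i) g)

/-- The canonical symplectic form `ω = Σ_{i=1}^n e_i* ∧ e_{i+n}*` on the free module
`E = (R[X_1,...,X_{2n}])^{2n}`. -/
noncomputable def canonicalSymplecticForm {R : Type*} [CommRing R] {n : ℕ}
    (u v : (Fin n ⊕ Fin n) → MvPolynomial (Fin n ⊕ Fin n) R) :
    MvPolynomial (Fin n ⊕ Fin n) R :=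
  ∑ i : Fin n, (u (Sum.inl i) * v (Sum.inr i) - u (Sum.inr i) * v (Sum.inl i))

/-- The Jacobian matrix of an algebra endomorphism of `R[X_1,...,X_{2n}]`. -/
noncomputable def jacobianMatrix {R : Type*} [CommRing R] {n : ℕ}
    (φ : MvPolynomial (Fin n ⊕ Fin n) R →ₐ[R] MvPolynomial (Fin n ⊕ Fin n) R) :
    Matrix (Fin n ⊕ Fin n) (Fin n ⊕ Fin n) (MvPolynomial (Fin n ⊕ Fin n) R) :=
  fun i j => pderiv j (φ (X i))

namespace SympAux
open Matrix

open List


/-- interleave two lists -/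
def interleave {α : Type*} : List α → List α → List α
  | [], t => t
  | a :: s, [] => a :: s
  | a :: s, b :: t => a :: b :: interleave s t

theorem getElem_eq_of_eq {α : Type*} {l l' : List α} (h : l = l') {i : ℕ} (hi : i < l.length) :
    l[i]'hi = l'[i]'(h ▸ hi) := by subst h; rfl

theorem interleave_cons_cons {α : Type*} (a b : α) (s t : List α) :
    interleave (a :: s) (b :: t) = a :: b :: interleave s t := rfl

theorem length_interleave {α : Type*} : ∀ (s t : List α),
    (interleave s t).length = s.length + t.length
  | [], t => by simp [interleave]
  | a :: s, [] => by simp [interleave]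
  | a :: s, b :: t => by
    simp [interleave, length_interleave s t]; omega

theorem interleave_perm {α : Type*} : ∀ (s t : List α), interleave s t ~ s ++ t
  | [], t => by simp [interleave]
  | a :: s, [] => by simp [interleave]
  | a :: s, b :: t => by
    rw [interleave_cons_cons]
    refine ((interleave_perm s t).cons b).cons a |>.trans ?_
    simpa using (List.perm_middle (a := b) (l₁ := s) (l₂ := t)).symm.cons a

theorem map_interleave {α β : Type*} (f : α → β) : ∀ (s t : List α),
    (interleave s t).map f = interleave (s.map f) (t.map f)
  | [], t => by simp [interleave]
  | a :: s, [] => by simp [interleave]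
  | a :: s, b :: t => by
    simp [interleave_cons_cons, map_interleave f s t]

theorem prod_interleave {M : Type*} [Monoid M] : ∀ (s t : List M), s.length = t.length →
    (List.zipWith (· * ·) s t).prod = (interleave s t).prod
  | [], [], _ => rfl
  | [], b :: t, h => by simp at h
  | a :: s, [], h => by simp at h
  | a :: s, b :: t, h => by
    simp only [List.zipWith_cons_cons, List.prod_cons, interleave_cons_cons]
    rw [prod_interleave s t (by simpa using h), mul_assoc]

theorem zipWith_ofFn {α β γ : Type*} (op : α → β → γ) :
    ∀ {m : ℕ} (f : Fin m → α) (g : Fin m → β),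
    List.zipWith op (List.ofFn f) (List.ofFn g) = List.ofFn fun i => op (f i) (g i)
  | 0, f, g => rfl
  | m + 1, f, g => by
    simp only [List.ofFn_succ, List.zipWith_cons_cons]
    rw [zipWith_ofFn op _ _]



variable {A : Type*} [Ring A]

theorem sum_pow_eq_zero : ∀ (l : List A), (∀ x ∈ l, x * x = 0) → l.Pairwise Commute →
    ∀ m : ℕ, l.length < m → l.sum ^ m = 0
  | [], _, _, m, hm => by
    simp only [List.sum_nil]
    exact zero_pow (by simp at hm; omega)
  | a :: t, hsq, hc, m, hm => by
    have hsqt : ∀ x ∈ t, x * x = 0 := fun x hx => hsq x (List.mem_cons_of_mem a hx)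
    have hct : t.Pairwise Commute := (List.pairwise_cons.mp hc).2
    have hsqa : a * a = 0 := hsq a List.mem_cons_self
    rw [List.sum_cons]
    have hcomm : Commute a t.sum :=
      Commute.list_sum_right _ _ fun y hy => (List.pairwise_cons.mp hc).1 y hy
    rw [hcomm.add_pow]
    apply Finset.sum_eq_zero
    intro k hk
    rcases Nat.lt_or_ge k 2 with hk2 | hk2
    · have hlen : t.length < m - k := by simp at hm ⊢; omega
      rw [sum_pow_eq_zero t hsqt hct (m - k) hlen, mul_zero, zero_mul]
    · have ha : a ^ k = 0 := by
        have h2 : a ^ k = a * a * a ^ (k - 2) := by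
          rw [← pow_two, ← pow_add]; congr 1; omega
        rw [h2, hsqa, zero_mul]
      rw [ha, zero_mul, zero_mul]

theorem sum_pow_length : ∀ (l : List A), (∀ x ∈ l, x * x = 0) → l.Pairwise Commute →
    l.sum ^ l.length = (l.length.factorial : A) * l.prod
  | [], _, _ => by simp
  | a :: t, hsq, hc => by
    have hsqt : ∀ x ∈ t, x * x = 0 := fun x hx => hsq x (List.mem_cons_of_mem a hx)
    have hct : t.Pairwise Commute := (List.pairwise_cons.mp hc).2
    have hsqa : a * a = 0 := hsq a List.mem_cons_self
    have hcomm : Commute a t.sum :=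
      Commute.list_sum_right _ _ fun y hy => (List.pairwise_cons.mp hc).1 y hy
    rw [List.sum_cons, List.length_cons, hcomm.add_pow]
    rw [Finset.sum_eq_single 1]
    · have hL : t.sum ^ (t.length + 1 - 1) = (t.length.factorial : A) * t.prod := by
        rw [Nat.add_sub_cancel, sum_pow_length t hsqt hct]
      rw [hL, pow_one, Nat.choose_one_right, List.prod_cons, Nat.factorial_succ]
      calc a * ((t.length.factorial : A) * t.prod) * ((t.length + 1 : ℕ) : A)
          = ((t.length + 1 : ℕ) : A) * (a * ((t.length.factorial : A) * t.prod)) :=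
            ((Nat.cast_commute (t.length + 1) _).eq).symm
        _ = ((t.length + 1 : ℕ) : A) * ((t.length.factorial : A) * (a * t.prod)) := by
            rw [← mul_assoc a, (Nat.cast_commute t.length.factorial a).eq.symm, mul_assoc]
        _ = (((t.length + 1) * t.length.factorial : ℕ) : A) * (a * t.prod) := by
            rw [Nat.cast_mul, mul_assoc]
    · intro k hk hk1
      rcases Nat.lt_or_ge k 2 with hk2 | hk2
      · have hk0 : k = 0 := by omega
        subst hk0
        rw [sum_pow_eq_zero t hsqt hct _ (by omega), mul_zero, zero_mul]
      · have ha : a ^ k = 0 := by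
          have h2 : a ^ k = a * a * a ^ (k - 2) := by
            rw [← pow_two, ← pow_add]; congr 1; omega
          rw [h2, hsqa, zero_mul]
        rw [ha, zero_mul, zero_mul]
    · intro h
      simp at h



variable {A : Type*} [Ring A]

theorem comm_of_anticomm (x r s : A) (h1 : x * r = -(r * x)) (h2 : x * s = -(s * x)) :
    Commute x (r * s) := by
  show x * (r * s) = r * s * x
  calc x * (r * s) = x * r * s := (mul_assoc _ _ _).symm
    _ = -(r * x) * s := by rw [h1]
    _ = -(r * (x * s)) := by rw [neg_mul, mul_assoc]
    _ = -(r * -(s * x)) := by rw [h2]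
    _ = r * (s * x) := by rw [mul_neg, neg_neg]
    _ = r * s * x := (mul_assoc _ _ _).symm

theorem pair_sq_zero (p q : A) (hq : q * q = 0) (hqp : q * p = -(p * q)) :
    p * q * (p * q) = 0 := by
  calc p * q * (p * q) = p * ((q * p) * q) := by rw [mul_assoc, ← mul_assoc q p q]
    _ = p * (-(p * (q * q))) := by rw [hqp, neg_mul, mul_assoc]
    _ = 0 := by rw [hq, mul_zero, neg_zero, mul_zero]

theorem sym_reduce {S : Type*} [CommRing S] {n : ℕ} {E : Type*} [Ring E] [Algebra S E]
    (y : (Fin n ⊕ Fin n) → E) (hsq : ∀ a, y a * y a = 0)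
    (hanti : ∀ a b, y b * y a = -(y a * y b))
    (C : (Fin n ⊕ Fin n) → (Fin n ⊕ Fin n) → S)
    (hC : ∀ x t, C x t - C t x =
      Matrix.fromBlocks (0 : Matrix (Fin n) (Fin n) S) 1 (-1) 0 x t) :
    ∑ x : Fin n ⊕ Fin n, ∑ t : Fin n ⊕ Fin n, C x t • (y x * y t)
      = ∑ i : Fin n, y (Sum.inl i) * y (Sum.inr i) := by
  classical
  set Ω : Matrix (Fin n ⊕ Fin n) (Fin n ⊕ Fin n) S := Matrix.fromBlocks (0 : Matrix (Fin n) (Fin n) S) 1 (-1) 0 with hΩ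
  set τ : (Fin n ⊕ Fin n) → ℕ := Sum.elim Fin.val (fun i => n + i.val) with hτ
  have hτinj : Function.Injective τ := by
    rintro (a | a) (b | b) h <;> simp only [hτ, Sum.elim_inl, Sum.elim_inr] at h
    · exact congrArg Sum.inl (Fin.ext h)
    · exact absurd h (by omega)
    · exact absurd h (by omega)
    · exact congrArg Sum.inr (Fin.ext (by omega))
  set F : (Fin n ⊕ Fin n) × (Fin n ⊕ Fin n) → E := fun p => C p.1 p.2 • (y p.1 * y p.2) with hF
  have step1 : ∑ x : Fin n ⊕ Fin n, ∑ t : Fin n ⊕ Fin n, C x t • (y x * y t)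
      = ∑ p ∈ Finset.univ.filter (fun p : (Fin n ⊕ Fin n) × (Fin n ⊕ Fin n) => τ p.1 < τ p.2),
          (F p + F p.swap) := by
    have hsp : ∑ x : Fin n ⊕ Fin n, ∑ t : Fin n ⊕ Fin n, C x t • (y x * y t)
        = ∑ p : (Fin n ⊕ Fin n) × (Fin n ⊕ Fin n), F p := (Fintype.sum_prod_type (f := F)).symm
    rw [hsp]
    rw [← Finset.sum_filter_add_sum_filter_not Finset.univ
      (fun p : (Fin n ⊕ Fin n) × (Fin n ⊕ Fin n) => τ p.1 < τ p.2) F]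
    rw [Finset.sum_add_distrib]
    congr 1
    rw [← Finset.sum_filter_add_sum_filter_not
      (Finset.univ.filter (fun p : (Fin n ⊕ Fin n) × (Fin n ⊕ Fin n) => ¬ τ p.1 < τ p.2))
      (fun p => τ p.2 < τ p.1) F]
    have hz : ∑ p ∈ (Finset.univ.filter
        (fun p : (Fin n ⊕ Fin n) × (Fin n ⊕ Fin n) => ¬ τ p.1 < τ p.2)).filter
        (fun p => ¬ τ p.2 < τ p.1), F p = 0 := by
      apply Finset.sum_eq_zero
      intro p hp
      simp only [Finset.mem_filter] at hp
      have : p.1 = p.2 := hτinj (by omega)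
      simp [hF, this, hsq]
    rw [hz, add_zero]
    refine Finset.sum_nbij' (fun p => p.swap) (fun p => p.swap) ?_ ?_ ?_ ?_ ?_
    · intro p hp
      simp only [Finset.mem_filter, Finset.mem_univ, true_and] at hp ⊢
      exact hp.2
    · intro p hp
      simp only [Finset.mem_filter, Finset.mem_univ, true_and] at hp ⊢
      exact ⟨not_lt_of_gt hp, hp⟩
    · intro p _; exact Prod.swap_swap p
    · intro p _; exact Prod.swap_swap p
    · intro p _; rw [Prod.swap_swap]
  rw [step1]
  have step2 : ∀ p ∈ Finset.univ.filter
      (fun p : (Fin n ⊕ Fin n) × (Fin n ⊕ Fin n) => τ p.1 < τ p.2),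
      F p + F p.swap = Ω p.1 p.2 • (y p.1 * y p.2) := by
    intro p _
    simp only [hF, Prod.fst_swap, Prod.snd_swap]
    rw [hanti p.1 p.2, smul_neg, ← hC p.1 p.2, sub_smul]
    abel
  rw [Finset.sum_congr rfl step2]
  rw [Finset.sum_filter]
  rw [Fintype.sum_prod_type (f := fun p : (Fin n ⊕ Fin n) × (Fin n ⊕ Fin n) =>
    if τ p.1 < τ p.2 then Ω p.1 p.2 • (y p.1 * y p.2) else 0)]
  rw [Fintype.sum_sum_type]
  have hb1 : ∀ i : Fin n, (∑ t : Fin n ⊕ Fin n,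
      if τ (Sum.inl i) < τ t then Ω (Sum.inl i) t • (y (Sum.inl i) * y t) else 0)
      = y (Sum.inl i) * y (Sum.inr i) := by
    intro i
    rw [Fintype.sum_sum_type]
    have h11 : (∑ j : Fin n, if τ (Sum.inl i) < τ (Sum.inl j)
        then Ω (Sum.inl i) (Sum.inl j) • (y (Sum.inl i) * y (Sum.inl j)) else 0) = 0 := by
      apply Finset.sum_eq_zero
      intro j _
      simp [hΩ, Matrix.fromBlocks_apply₁₁]
    have h12 : (∑ j : Fin n, if τ (Sum.inl i) < τ (Sum.inr j)
        then Ω (Sum.inl i) (Sum.inr j) • (y (Sum.inl i) * y (Sum.inr j)) else 0)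
        = y (Sum.inl i) * y (Sum.inr i) := by
      have hcond : ∀ j : Fin n, τ (Sum.inl i) < τ (Sum.inr j) := by
        intro j
        simp only [hτ, Sum.elim_inl, Sum.elim_inr]
        omega
      simp only [hcond, if_true, hΩ, Matrix.fromBlocks_apply₁₂, Matrix.one_apply]
      rw [Finset.sum_congr rfl (fun j _ => by
        rw [ite_smul, one_smul, zero_smul] :
        ∀ j ∈ Finset.univ, ((if i = j then (1:S) else 0) • (y (Sum.inl i) * y (Sum.inr j)))
          = if i = j then y (Sum.inl i) * y (Sum.inr j) else 0)]
      exact Finset.sum_ite_eq Finset.univ i (fun j => y (Sum.inl i) * y (Sum.inr j))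
        |>.trans (if_pos (Finset.mem_univ i))
    rw [h11, h12, zero_add]
  have hb2 : ∀ i : Fin n, (∑ t : Fin n ⊕ Fin n,
      if τ (Sum.inr i) < τ t then Ω (Sum.inr i) t • (y (Sum.inr i) * y t) else 0) = 0 := by
    intro i
    rw [Fintype.sum_sum_type]
    have h21 : (∑ j : Fin n, if τ (Sum.inr i) < τ (Sum.inl j)
        then Ω (Sum.inr i) (Sum.inl j) • (y (Sum.inr i) * y (Sum.inl j)) else 0) = 0 := by
      apply Finset.sum_eq_zero
      intro j _
      have : ¬ τ (Sum.inr i) < τ (Sum.inl j) := by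
        simp only [hτ, Sum.elim_inl, Sum.elim_inr]
        omega
      rw [if_neg this]
    have h22 : (∑ j : Fin n, if τ (Sum.inr i) < τ (Sum.inr j)
        then Ω (Sum.inr i) (Sum.inr j) • (y (Sum.inr i) * y (Sum.inr j)) else 0) = 0 := by
      apply Finset.sum_eq_zero
      intro j _
      simp [hΩ, Matrix.fromBlocks_apply₂₂]
    rw [h21, h22, add_zero]
  rw [Finset.sum_congr rfl (fun i _ => hb1 i), Finset.sum_congr rfl (fun i _ => hb2 i)]
  simp


set_option maxHeartbeats 1000000 in
theorem aux_det {S : Type*} [CommRing S] {n : ℕ}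
    (hfac : IsUnit ((n.factorial : ℕ) : S))
    (M : Matrix (Fin n ⊕ Fin n) (Fin n ⊕ Fin n) S)
    (hC : ∀ x t : Fin n ⊕ Fin n,
      (∑ i : Fin n, M (Sum.inl i) x * M (Sum.inr i) t)
        - (∑ i : Fin n, M (Sum.inl i) t * M (Sum.inr i) x)
        = Matrix.fromBlocks (0 : Matrix (Fin n) (Fin n) S) 1 (-1) 0 x t) :
    M.det = 1 := by
  classical
  let ea : (Fin n ⊕ Fin n) → ((Fin n ⊕ Fin n) → S) := fun a => Pi.single a 1
  let y : (Fin n ⊕ Fin n) → ExteriorAlgebra S ((Fin n ⊕ Fin n) → S) :=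
    fun a => ExteriorAlgebra.ι S (ea a)
  have hsq : ∀ a, y a * y a = 0 := fun a => ExteriorAlgebra.ι_sq_zero (ea a)
  have hanti : ∀ a b, y b * y a = -(y a * y b) := fun a b =>
    eq_neg_of_add_eq_zero_right (ExteriorAlgebra.ι_add_mul_swap (ea a) (ea b))
  let L : ((Fin n ⊕ Fin n) → S) →ₗ[S] ((Fin n ⊕ Fin n) → S) := Matrix.toLin' Mᵀ
  have hLy : ∀ a, L (ea a) = ∑ x, M a x • ea x := by
    intro a
    funext t
    show Mᵀ.mulVec (Pi.single a 1) t = _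
    have h1 : Mᵀ.mulVec (Pi.single a 1) t = M a t := by
      simp only [Matrix.mulVec, dotProduct, Pi.single_apply, mul_ite, mul_one, mul_zero]
      rw [Finset.sum_ite_eq' Finset.univ a (fun c => Mᵀ t c)]
      simp [Matrix.transpose_apply]
    have h2 : (∑ x, M a x • ea x) t = M a t := by
      rw [Finset.sum_apply]
      simp [ea, Pi.single_apply]
    rw [h1, h2]
  set w : ExteriorAlgebra S ((Fin n ⊕ Fin n) → S) := ∑ i : Fin n, y (Sum.inl i) * y (Sum.inr i) with hw
  have hmapy : ∀ c, (ExteriorAlgebra.map L) (y c) = ∑ x, M c x • y x := by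
    intro c
    show (ExteriorAlgebra.map L) (ExteriorAlgebra.ι S (ea c)) = _
    rw [ExteriorAlgebra.map_apply_ι, hLy c, map_sum]
    simp only [_root_.map_smul]
    rfl
  have expand : ∀ a b : Fin n ⊕ Fin n, (ExteriorAlgebra.map L) (y a * y b)
      = ∑ x : Fin n ⊕ Fin n, ∑ t : Fin n ⊕ Fin n, (M a x * M b t) • (y x * y t) := by
    intro a b
    rw [_root_.map_mul, hmapy a, hmapy b, Finset.sum_mul_sum]
    refine Finset.sum_congr rfl fun x _ => Finset.sum_congr rfl fun t _ => ?_
    rw [smul_mul_assoc, mul_smul_comm, smul_smul]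
  have hswap : (∑ i : Fin n, ∑ x : Fin n ⊕ Fin n, ∑ t : Fin n ⊕ Fin n,
        (M (Sum.inl i) x * M (Sum.inr i) t) • (y x * y t))
      = ∑ x : Fin n ⊕ Fin n, ∑ t : Fin n ⊕ Fin n,
        (∑ i : Fin n, M (Sum.inl i) x * M (Sum.inr i) t) • (y x * y t) := by
    rw [Finset.sum_comm]
    refine Finset.sum_congr rfl fun x _ => ?_
    rw [Finset.sum_comm]
    refine Finset.sum_congr rfl fun t _ => ?_
    rw [Finset.sum_smul]
  have hmapw : (ExteriorAlgebra.map L) w = w := by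
    rw [hw, map_sum, Finset.sum_congr rfl fun i _ => expand (Sum.inl i) (Sum.inr i), hswap]
    exact sym_reduce y hsq hanti _ (fun x t => by rw [← hC x t])
  -- the power of w
  let xs : List (ExteriorAlgebra S ((Fin n ⊕ Fin n) → S)) :=
    List.ofFn (fun i : Fin n => y (Sum.inl i) * y (Sum.inr i))
  have hxs_sum : xs.sum = w := by rw [hw]; exact List.sum_ofFn
  have hxs_len : xs.length = n := List.length_ofFn
  have hxs_sq : ∀ z ∈ xs, z * z = 0 := by
    intro z hz
    rw [List.mem_ofFn] at hz
    obtain ⟨i, rfl⟩ := hz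
    exact pair_sq_zero _ _ (hsq (Sum.inr i)) (hanti (Sum.inl i) (Sum.inr i))
  have hxs_comm : xs.Pairwise Commute := by
    rw [List.pairwise_ofFn]
    intro i j _
    exact Commute.mul_left
      (comm_of_anticomm _ _ _ (hanti (Sum.inl j) (Sum.inl i)) (hanti (Sum.inr j) (Sum.inl i)))
      (comm_of_anticomm _ _ _ (hanti (Sum.inl j) (Sum.inr i)) (hanti (Sum.inr j) (Sum.inr i)))
  have hwn : w ^ n = ((n.factorial : ℕ) : ExteriorAlgebra S ((Fin n ⊕ Fin n) → S)) * xs.prod := by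
    have h := sum_pow_length xs hxs_sq hxs_comm
    rw [hxs_sum, hxs_len] at h
    exact h
  have hinv : ((n.factorial : ℕ) : ExteriorAlgebra S ((Fin n ⊕ Fin n) → S))
        * (ExteriorAlgebra.map L) xs.prod
      = ((n.factorial : ℕ) : ExteriorAlgebra S ((Fin n ⊕ Fin n) → S)) * xs.prod := by
    have h1 : (ExteriorAlgebra.map L) (w ^ n) = w ^ n := by rw [map_pow, hmapw]
    calc ((n.factorial : ℕ) : ExteriorAlgebra S ((Fin n ⊕ Fin n) → S))
          * (ExteriorAlgebra.map L) xs.prod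
        = (ExteriorAlgebra.map L)
            (((n.factorial : ℕ) : ExteriorAlgebra S ((Fin n ⊕ Fin n) → S)) * xs.prod) := by
          rw [_root_.map_mul, map_natCast]
      _ = (ExteriorAlgebra.map L) (w ^ n) := by rw [← hwn]
      _ = w ^ n := h1
      _ = _ * xs.prod := hwn
  -- the interleaved list of basis vectors
  let la : List ((Fin n ⊕ Fin n) → S) := List.ofFn (fun i : Fin n => ea (Sum.inl i))
  let lb : List ((Fin n ⊕ Fin n) → S) := List.ofFn (fun i : Fin n => ea (Sum.inr i))
  let vl : List ((Fin n ⊕ Fin n) → S) := interleave la lb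
  have hvl_len : vl.length = n + n := by
    show (interleave la lb).length = n + n
    rw [length_interleave]
    simp [la, lb]
  have hxsprod : xs.prod = (vl.map (ExteriorAlgebra.ι S)).prod := by
    have h1 : xs = List.zipWith (· * ·)
        (List.ofFn (fun i : Fin n => ExteriorAlgebra.ι S (ea (Sum.inl i))))
        (List.ofFn (fun i : Fin n => ExteriorAlgebra.ι S (ea (Sum.inr i)))) := by
      rw [zipWith_ofFn]
    rw [h1, prod_interleave _ _ (by simp)]
    show (interleave _ _).prod = ((interleave la lb).map (ExteriorAlgebra.ι S)).prod
    have e1 : la.map (ExteriorAlgebra.ι S)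
        = List.ofFn (fun i : Fin n => ExteriorAlgebra.ι S (ea (Sum.inl i))) :=
      List.map_ofFn
    have e2 : lb.map (ExteriorAlgebra.ι S)
        = List.ofFn (fun i : Fin n => ExteriorAlgebra.ι S (ea (Sum.inr i))) :=
      List.map_ofFn
    rw [map_interleave, e1, e2]
  -- pairing with the determinant
  let G' : ((Fin n ⊕ Fin n) → S) [⋀^Fin (n + n)]→ₗ[S] S :=
    (Matrix.detRowAlternating :
      ((Fin n ⊕ Fin n) → S) [⋀^(Fin n ⊕ Fin n)]→ₗ[S] S).domDomCongr finSumFinEquiv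
  let fam : ∀ k : ℕ, ((Fin n ⊕ Fin n) → S) [⋀^Fin k]→ₗ[S] S := fun k =>
    if h : k = n + n then G'.domDomCongr (finCongr h.symm) else 0
  let F : ExteriorAlgebra S ((Fin n ⊕ Fin n) → S) →ₗ[S] S :=
    ExteriorAlgebra.liftAlternating fam
  have hpair : ∀ ml : List ((Fin n ⊕ Fin n) → S),
      F ((ml.map (ExteriorAlgebra.ι S)).prod) = fam ml.length ml.get := by
    intro ml
    have h1 : ml.map (ExteriorAlgebra.ι S)
        = List.ofFn (fun i => ExteriorAlgebra.ι S (ml.get i)) := by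
      have := (List.map_ofFn (f := ml.get) (g := ExteriorAlgebra.ι S)).symm
      rw [List.ofFn_get] at this
      exact this.symm
    rw [h1, ← ExteriorAlgebra.ιMulti_apply, ExteriorAlgebra.liftAlternating_apply_ιMulti]
  have hfam : ∀ (k : ℕ) (h : k = n + n) (v : Fin k → ((Fin n ⊕ Fin n) → S)),
      fam k v = G' (fun j => v (finCongr h.symm j)) := by
    intro k h v
    subst h
    simp [fam, finCongr_refl]
  have hG : ∀ v : Fin (n + n) → ((Fin n ⊕ Fin n) → S),
      G' v = Matrix.det (Matrix.of fun a b => v (finSumFinEquiv a) b) := fun v => rfl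
  have hFz : F xs.prod = G' (fun j => vl.get (finCongr hvl_len.symm j)) := by
    rw [hxsprod, hpair vl, hfam vl.length hvl_len]
  have hmapLprod : (ExteriorAlgebra.map L) xs.prod
      = ((vl.map L).map (ExteriorAlgebra.ι S)).prod := by
    rw [hxsprod, map_list_prod, List.map_map, List.map_map]
    congr 1
    exact List.map_congr_left (fun v _ => ExteriorAlgebra.map_apply_ι L v)
  have hFLz : F ((ExteriorAlgebra.map L) xs.prod)
      = G' (fun j => L (vl.get (finCongr hvl_len.symm j))) := by
    rw [hmapLprod, hpair (vl.map L),
      hfam (vl.map L).length (by rw [List.length_map, hvl_len])]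
    congr 1
    funext j
    simp [List.get_eq_getElem, List.getElem_map, finCongr_apply, Fin.coe_cast]
  have hkey : ((n.factorial : ℕ) : S) * F ((ExteriorAlgebra.map L) xs.prod)
      = ((n.factorial : ℕ) : S) * F xs.prod := by
    have h2 := congrArg F hinv
    rw [show ((n.factorial : ℕ) : ExteriorAlgebra S ((Fin n ⊕ Fin n) → S))
          * (ExteriorAlgebra.map L) xs.prod
        = (n.factorial : ℕ) • ((ExteriorAlgebra.map L) xs.prod) from (nsmul_eq_mul _ _).symm,
      show ((n.factorial : ℕ) : ExteriorAlgebra S ((Fin n ⊕ Fin n) → S)) * xs.prod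
        = (n.factorial : ℕ) • xs.prod from (nsmul_eq_mul _ _).symm,
      map_nsmul, map_nsmul] at h2
    rwa [nsmul_eq_mul, nsmul_eq_mul] at h2
  -- identifying the determinants
  let il : List (Fin n ⊕ Fin n) := interleave (List.ofFn Sum.inl) (List.ofFn Sum.inr)
  have hil_len : il.length = n + n := by
    show (interleave _ _).length = n + n
    rw [length_interleave]
    simp
  have hvl_il : vl = il.map ea := by
    show interleave la lb = (interleave (List.ofFn Sum.inl) (List.ofFn Sum.inr)).map ea
    have e1 : (List.ofFn Sum.inl).map ea = la := (List.map_ofFn).trans rfl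
    have e2 : (List.ofFn Sum.inr).map ea = lb := (List.map_ofFn).trans rfl
    rw [map_interleave, e1, e2]
  have hil_nodup : il.Nodup := by
    rw [(interleave_perm _ _).nodup_iff]
    rw [List.nodup_append]
    refine ⟨List.nodup_ofFn.mpr Sum.inl_injective, List.nodup_ofFn.mpr Sum.inr_injective, ?_⟩
    intro a ha b hb hab
    rw [List.mem_ofFn] at ha hb
    obtain ⟨i, rfl⟩ := ha
    obtain ⟨j, hj⟩ := hb
    subst hab
    simp at hj
  let σf : (Fin n ⊕ Fin n) → (Fin n ⊕ Fin n) :=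
    fun a => il.get (finCongr hil_len.symm (finSumFinEquiv a))
  have hσinj : Function.Injective σf := by
    intro a b hab
    have h1 := (List.nodup_iff_injective_get.mp hil_nodup) hab
    have h2 := (finCongr hil_len.symm).injective h1
    exact finSumFinEquiv.injective h2
  let σe : Equiv.Perm (Fin n ⊕ Fin n) :=
    Equiv.ofBijective σf ((Finite.injective_iff_bijective).mp hσinj)
  have hv : ∀ a : Fin n ⊕ Fin n,
      vl.get (finCongr hvl_len.symm (finSumFinEquiv a)) = ea (σf a) := by
    intro a
    have hb1 : ((finSumFinEquiv a : ℕ)) < vl.length := by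
      rw [hvl_len]; exact (finSumFinEquiv a).isLt
    have hb2 : ((finSumFinEquiv a : ℕ)) < (il.map ea).length := by rw [← hvl_il]; exact hb1
    have hb3 : ((finSumFinEquiv a : ℕ)) < il.length := by
      rw [hil_len]; exact (finSumFinEquiv a).isLt
    have e1 : vl.get (finCongr hvl_len.symm (finSumFinEquiv a))
        = vl[((finSumFinEquiv a : ℕ))]'hb1 := rfl
    have e2 : vl[((finSumFinEquiv a : ℕ))]'hb1 = (il.map ea)[((finSumFinEquiv a : ℕ))]'hb2 :=
      getElem_eq_of_eq hvl_il hb1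
    have e3 : (il.map ea)[((finSumFinEquiv a : ℕ))]'hb2 = ea (il[((finSumFinEquiv a : ℕ))]'hb3) :=
      List.getElem_map _
    have e4 : ea (il[((finSumFinEquiv a : ℕ))]'hb3) = ea (σf a) := rfl
    rw [e1, e2, e3, e4]
  have hN : (Matrix.of fun a b => vl.get (finCongr hvl_len.symm (finSumFinEquiv a)) b)
      = (1 : Matrix (Fin n ⊕ Fin n) (Fin n ⊕ Fin n) S).submatrix σe id := by
    ext a b
    rw [Matrix.submatrix_apply, Matrix.one_apply]
    show vl.get (finCongr hvl_len.symm (finSumFinEquiv a)) b = _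
    rw [hv a]
    show (Pi.single (σf a) 1 : (Fin n ⊕ Fin n) → S) b = if σe a = b then 1 else 0
    have hσea : σe a = σf a := rfl
    rw [hσea, Pi.single_apply]
    by_cases hb : b = σf a
    · rw [if_pos hb, if_pos hb.symm]
    · rw [if_neg hb, if_neg (fun h => hb h.symm)]
  have hNM : (Matrix.of fun a b => L (vl.get (finCongr hvl_len.symm (finSumFinEquiv a))) b)
      = ((1 : Matrix (Fin n ⊕ Fin n) (Fin n ⊕ Fin n) S).submatrix σe id) * M := by
    ext a b
    rw [Matrix.mul_apply]
    show L (vl.get (finCongr hvl_len.symm (finSumFinEquiv a))) b = _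
    rw [hv a]
    show Mᵀ.mulVec (Pi.single (σf a) 1) b = _
    have hL : Mᵀ.mulVec (Pi.single (σf a) 1) b = M (σf a) b := by
      simp only [Matrix.mulVec, dotProduct, Pi.single_apply, mul_ite, mul_one, mul_zero]
      rw [Finset.sum_ite_eq' Finset.univ (σf a) (fun c => Mᵀ b c)]
      simp [Matrix.transpose_apply]
    rw [hL]
    have hR : ∑ t, ((1 : Matrix (Fin n ⊕ Fin n) (Fin n ⊕ Fin n) S).submatrix σe id) a t * M t b
        = M (σf a) b := by
      simp only [Matrix.submatrix_apply, Matrix.one_apply, id_eq, ite_mul, one_mul, zero_mul]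
      rw [Finset.sum_ite_eq Finset.univ (σe a) (fun t => M t b)]
      simp only [Finset.mem_univ, if_true]
      rfl
    rw [hR]
  have hdet1 : F xs.prod
      = ((1 : Matrix (Fin n ⊕ Fin n) (Fin n ⊕ Fin n) S).submatrix σe id).det := by
    rw [hFz, hG, hN]
  have hdet2 : F ((ExteriorAlgebra.map L) xs.prod)
      = (((1 : Matrix (Fin n ⊕ Fin n) (Fin n ⊕ Fin n) S).submatrix σe id) * M).det := by
    rw [hFLz, hG, hNM]
  rw [hdet1, hdet2, Matrix.det_mul] at hkey
  have hdetN : ((1 : Matrix (Fin n ⊕ Fin n) (Fin n ⊕ Fin n) S).submatrix σe id).det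
      * ((1 : Matrix (Fin n ⊕ Fin n) (Fin n ⊕ Fin n) S).submatrix σe id).det = 1 := by
    rw [Matrix.det_permute, Matrix.det_one, mul_one]
    rw [← Int.cast_mul, ← Units.val_mul, Int.units_mul_self, Units.val_one, Int.cast_one]
  have hNunit : IsUnit ((1 : Matrix (Fin n ⊕ Fin n) (Fin n ⊕ Fin n) S).submatrix σe id).det :=
    IsUnit.of_mul_eq_one _ hdetN
  have h3 := hfac.mul_left_cancel hkey
  exact hNunit.mul_left_cancel (by rw [h3, mul_one])

end SympAux


theorem det_eq_one_of_symplectic_matrix {R : Type*} [CommRing R] {n : ℕ}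
    (hfact : IsUnit ((Nat.factorial n : ℕ) : R))
    (M : Matrix (Fin n ⊕ Fin n) (Fin n ⊕ Fin n) (MvPolynomial (Fin n ⊕ Fin n) R))
    (hsymp : ∀ u v : (Fin n ⊕ Fin n) → MvPolynomial (Fin n ⊕ Fin n) R,
      canonicalSymplecticForm (Mᵀ.mulVec u) (Mᵀ.mulVec v)
        = canonicalSymplecticForm u v) :
    M.det = 1 := by
  classical
  have hfacS : IsUnit ((n.factorial : ℕ) : MvPolynomial (Fin n ⊕ Fin n) R) := by
    have h := hfact.map (algebraMap R (MvPolynomial (Fin n ⊕ Fin n) R))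
    rwa [map_natCast] at h
  have hmv : ∀ a : Fin n ⊕ Fin n, Mᵀ.mulVec (Pi.single a 1) = fun x => M a x := by
    intro a
    funext x
    simp only [Matrix.mulVec, dotProduct, Pi.single_apply, mul_ite, mul_one, mul_zero]
    rw [Finset.sum_ite_eq' Finset.univ a (fun c => Mᵀ x c)]
    simp [Matrix.transpose_apply]
  have hsingle : ∀ a b : Fin n ⊕ Fin n,
      canonicalSymplecticForm (R := R) (Pi.single a 1) (Pi.single b 1)
        = Matrix.fromBlocks (0 : Matrix (Fin n) (Fin n) (MvPolynomial (Fin n ⊕ Fin n) R))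
            1 (-1) 0 a b := by
    intro a b
    rcases a with p | p <;> rcases b with q | q <;>
      simp [canonicalSymplecticForm, Pi.single_apply, Matrix.one_apply, eq_comm]
  have hrow : ∀ a b : Fin n ⊕ Fin n,
      (∑ i : Fin n, (M a (Sum.inl i) * M b (Sum.inr i) - M a (Sum.inr i) * M b (Sum.inl i)))
        = Matrix.fromBlocks (0 : Matrix (Fin n) (Fin n) (MvPolynomial (Fin n ⊕ Fin n) R))
            1 (-1) 0 a b := by
    intro a b
    have h := hsymp (Pi.single a 1) (Pi.single b 1)
    rw [hmv a, hmv b] at h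
    exact h.trans (hsingle a b)
  set Ω : Matrix (Fin n ⊕ Fin n) (Fin n ⊕ Fin n) (MvPolynomial (Fin n ⊕ Fin n) R) :=
    Matrix.fromBlocks (0 : Matrix (Fin n) (Fin n) (MvPolynomial (Fin n ⊕ Fin n) R)) 1 (-1) 0
    with hΩ
  have hMΩ : M * Ω * Mᵀ = Ω := by
    refine Matrix.ext fun a b => ?_
    rw [Matrix.mul_apply]
    have hMΩd : ∀ d, (M * Ω) a d
        = Sum.elim (fun j => -(M a (Sum.inr j))) (fun j => M a (Sum.inl j)) d := by
      rintro (j | j) <;>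
        simp [Matrix.mul_apply, Fintype.sum_sum_type, hΩ, Matrix.one_apply, mul_ite,
          Finset.sum_ite_eq]
    rw [Finset.sum_congr rfl fun d (_ : d ∈ Finset.univ) => by rw [hMΩd d]]
    rw [Fintype.sum_sum_type]
    simp only [Sum.elim_inl, Sum.elim_inr, Matrix.transpose_apply]
    rw [← Finset.sum_add_distrib]
    rw [Finset.sum_congr rfl (fun j (_ : j ∈ Finset.univ) => by ring :
      ∀ j ∈ Finset.univ, -M a (Sum.inr j) * M b (Sum.inl j) + M a (Sum.inl j) * M b (Sum.inr j)
        = M a (Sum.inl j) * M b (Sum.inr j) - M a (Sum.inr j) * M b (Sum.inl j))]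
    exact hrow a b
  have hJΩ : Matrix.J (Fin n) (MvPolynomial (Fin n ⊕ Fin n) R) = -Ω := by
    rw [hΩ, Matrix.J]
    ext (a | a) (b | b) <;> simp
  have hmem : M ∈ Matrix.symplecticGroup (Fin n) (MvPolynomial (Fin n ⊕ Fin n) R) := by
    rw [SymplecticGroup.mem_iff, hJΩ, Matrix.mul_neg, Matrix.neg_mul, hMΩ]
  have hcolΩ : Mᵀ * Ω * M = Ω := by
    have h := SymplecticGroup.mem_iff'.mp hmem
    rw [hJΩ, Matrix.mul_neg, Matrix.neg_mul] at h
    exact neg_injective h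
  refine SympAux.aux_det hfacS M ?_
  intro x t
  have h := congrFun (congrFun hcolΩ x) t
  have hMΩd : ∀ d, (Mᵀ * Ω) x d
      = Sum.elim (fun j => -(M (Sum.inr j) x)) (fun j => M (Sum.inl j) x) d := by
    rintro (j | j) <;>
      simp [Matrix.mul_apply, Fintype.sum_sum_type, hΩ, Matrix.one_apply, mul_ite,
        Finset.sum_ite_eq, Matrix.transpose_apply]
  rw [Matrix.mul_apply] at h
  rw [Finset.sum_congr rfl fun d (_ : d ∈ Finset.univ) => by rw [hMΩd d]] at h
  rw [Fintype.sum_sum_type] at h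
  simp only [Sum.elim_inl, Sum.elim_inr] at h
  rw [← hΩ, ← h, ← Finset.sum_sub_distrib, ← Finset.sum_add_distrib]
  exact Finset.sum_congr rfl fun j _ => by ring

/-- if `n!` is invertible in `R` and `φ` is a symplectic algebra
endomorphism of `R[X_1,...,X_{2n}]` (the pullback of the canonical symplectic form
by the linear map with matrix `(Jφ)ᵀ` equals `ω`), then `det (Jφ) = 1`. -/
theorem det_jacobian_of_symplectic {R : Type*} [CommRing R] {n : ℕ} (hn : 0 < n)
    (hfact : IsUnit ((Nat.factorial n : ℕ) : R))
    (φ : MvPolynomial (Fin n ⊕ Fin n) R →ₐ[R] MvPolynomial (Fin n ⊕ Fin n) R)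
    (hsymp : ∀ u v : (Fin n ⊕ Fin n) → MvPolynomial (Fin n ⊕ Fin n) R,
      canonicalSymplecticForm ((jacobianMatrix φ)ᵀ.mulVec u) ((jacobianMatrix φ)ᵀ.mulVec v)
        = canonicalSymplecticForm u v) :
    (jacobianMatrix φ).det = 1 := by
  exact det_eq_one_of_symplectic_matrix hfact (jacobianMatrix φ) hsymp
end

section
/- Let K be a field of characteristic p > 0. The K-algebra endomorphism φ of K[X_1, X_2] defined by φ(X_1) = X_1 − X_1^p and φ(X_2) = X_2 preserves the canonical Poisson bracket {f,g} = ∂f/∂X_1 · ∂g/∂X_2 − ∂f/∂X_2 · ∂g/∂X_1, but φ is not an automorphism of K[X_1, X_2]. -/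
open MvPolynomial

/-- The canonical Poisson bracket on `K[X_1, X_2]`. -/
noncomputable def poissonBracket2 {K : Type*} [CommRing K]
    (f g : MvPolynomial (Fin 2) K) : MvPolynomial (Fin 2) K :=
  pderiv 0 f * pderiv 1 g - pderiv 1 f * pderiv 0 g

/-- The endomorphism of `K[X_1, X_2]` with `X_1 ↦ X_1 − X_1^p`, `X_2 ↦ X_2`. -/
noncomputable def naivePoissonCounterexample (K : Type*) [CommRing K] (p : ℕ) :
    MvPolynomial (Fin 2) K →ₐ[K] MvPolynomial (Fin 2) K :=
  aeval (fun i : Fin 2 => if i = 0 then X 0 - X 0 ^ p else X 1)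

/-
The substitution `X₁ ↦ X₁ − X₁ᵖ`, `X₂ ↦ X₂` has identity Jacobian in characteristic `p`,
since `∂(X₁ᵖ) = p X₁ᵖ⁻¹ = 0`. An endomorphism whose Jacobian is the identity commutes with
both partial derivatives, hence preserves the bracket. It is not surjective: setting `X₂ = 0`
turns a preimage `g` of `X₁` into a one-variable polynomial with `g(X − Xᵖ) = X`, impossible
for degree reasons since `deg (X − Xᵖ) = p > 1`.
-/

section PartialDerivatives

variable {σ R : Type*} [CommSemiring R]

theorem aeval_pderiv_X (g : σ → MvPolynomial σ R) (i j : σ) :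
    aeval g (pderiv i (X j : MvPolynomial σ R)) = pderiv i (X j) := by
  by_cases h : j = i
  · simp [h]
  · simp [pderiv_X_of_ne h]

theorem pderiv_aeval_of_pderiv_eq_pderiv_X {g : σ → MvPolynomial σ R}
    (hg : ∀ i j, pderiv i (g j) = pderiv i (X j)) (i : σ) (f : MvPolynomial σ R) :
    pderiv i (aeval g f) = aeval g (pderiv i f) := by
  induction f using MvPolynomial.induction_on with
  | C a => simp
  | add f f' hf hf' => simp only [map_add, hf, hf']
  | mul_X f j hf =>
    simp only [map_add, map_mul, pderiv_mul, aeval_X, hf, hg, aeval_pderiv_X]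

theorem pderiv_pow_char (p : ℕ) [CharP R p] (i : σ) (f : MvPolynomial σ R) :
    pderiv i (f ^ p) = 0 := by
  rw [pderiv_pow, CharP.cast_eq_zero, zero_mul, zero_mul]

end PartialDerivatives

theorem poissonBracket2_map_of_commute_pderiv {R : Type*} [CommRing R]
    {φ : MvPolynomial (Fin 2) R →ₐ[R] MvPolynomial (Fin 2) R}
    (hφ : ∀ i f, pderiv i (φ f) = φ (pderiv i f)) (f g : MvPolynomial (Fin 2) R) :
    poissonBracket2 (φ f) (φ g) = φ (poissonBracket2 f g) := by
  simp only [poissonBracket2, hφ, map_sub, map_mul]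

theorem Polynomial.comp_ne_X_of_natDegree_ne_one {R : Type*} [Semiring R] [Nontrivial R] [NoZeroDivisors R]
    {q : Polynomial R} (hq : q.natDegree ≠ 1) (g : Polynomial R) : g.comp q ≠ Polynomial.X := by
  intro h
  have := congrArg Polynomial.natDegree h
  rw [Polynomial.natDegree_comp, Polynomial.natDegree_X] at this
  exact hq (Nat.eq_one_of_mul_eq_one_left this)

section NaivePoissonCounterexample

variable {K : Type*} [CommRing K] (p : ℕ)

@[simp]
theorem naivePoissonCounterexample_X_zero :
    naivePoissonCounterexample K p (X 0) = X 0 - X 0 ^ p := by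
  simp [naivePoissonCounterexample]

@[simp]
theorem naivePoissonCounterexample_X_one :
    naivePoissonCounterexample K p (X 1) = X 1 := by
  simp [naivePoissonCounterexample]

theorem pderiv_naivePoissonCounterexample [CharP K p] (i : Fin 2) (f : MvPolynomial (Fin 2) K) :
    pderiv i (naivePoissonCounterexample K p f) = naivePoissonCounterexample K p (pderiv i f) := by
  refine pderiv_aeval_of_pderiv_eq_pderiv_X (fun i j => ?_) i f
  fin_cases j
  · simp only [Fin.zero_eta, Fin.isValue, ↓reduceIte, map_sub, pderiv_pow_char, sub_zero]
  · simp

theorem aeval_comp_naivePoissonCounterexample :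
    (Polynomial.aeval (Polynomial.X - Polynomial.X ^ p : Polynomial K)).comp
        (aeval ![Polynomial.X, 0] : MvPolynomial (Fin 2) K →ₐ[K] Polynomial K) =
      (aeval ![Polynomial.X, 0]).comp (naivePoissonCounterexample K p) := by
  apply MvPolynomial.algHom_ext
  intro j
  fin_cases j <;> simp

theorem naivePoissonCounterexample_ne_X_zero [IsDomain K] (hp : 1 < p)
    (g : MvPolynomial (Fin 2) K) : naivePoissonCounterexample K p g ≠ X 0 := by
  intro hg
  have hcomp := congrArg (· g) (aeval_comp_naivePoissonCounterexample (K := K) p)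
  simp only [AlgHom.comp_apply, hg, aeval_X] at hcomp
  have hdeg : (Polynomial.X - Polynomial.X ^ p : Polynomial K).natDegree = p := by
    rw [Polynomial.natDegree_sub_eq_right_of_natDegree_lt] <;> simp [hp]
  refine Polynomial.comp_ne_X_of_natDegree_ne_one (hdeg ▸ hp.ne') (aeval ![Polynomial.X, 0] g) ?_
  rw [Polynomial.comp_eq_aeval, hcomp]
  simp

end NaivePoissonCounterexample

/-- over a field of characteristic `p > 0`, the endomorphism
`φ(X_1) = X_1 − X_1^p`, `φ(X_2) = X_2` of `K[X_1,X_2]` preserves the canonical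
Poisson bracket, but is not an automorphism. -/
theorem naive_poisson_conjecture_counterexample
    {K : Type*} [Field K] (p : ℕ) [Fact p.Prime] [CharP K p] :
    naivePoissonCounterexample K p (X 0) = X 0 - X 0 ^ p
    ∧ naivePoissonCounterexample K p (X 1) = X 1
    ∧ (∀ f g : MvPolynomial (Fin 2) K,
        poissonBracket2 (naivePoissonCounterexample K p f) (naivePoissonCounterexample K p g)
          = naivePoissonCounterexample K p (poissonBracket2 f g))
    ∧ ¬ Function.Bijective (naivePoissonCounterexample K p) := by
  refine ⟨naivePoissonCounterexample_X_zero p, naivePoissonCounterexample_X_one p,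
    poissonBracket2_map_of_commute_pderiv (pderiv_naivePoissonCounterexample p), ?_⟩
  rintro ⟨-, hsurj⟩
  obtain ⟨g, hg⟩ := hsurj (X 0)
  exact naivePoissonCounterexample_ne_X_zero p (Fact.out : p.Prime).one_lt g hg
end

section
/- Let K be a field of characteristic p > 0. The K-algebra endomorphism φ of the first Weyl algebra A_1(K) (generated by Y_1, Y_2 with [Y_1,Y_2] = 1) defined by φ(Y_1) = Y_1 − Y_1^p and φ(Y_2) = Y_2 is a well-defined K-algebra endomorphism (i.e., [φ(Y_1), φ(Y_2)] = 1), but it is not an automorphism of A_1(K). -/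
/-- The defining relations of the `n`-th Weyl (Dirac quantum) algebra over `R`:
for `i < j`, `Y_i Y_j = Y_j Y_i + δ_{i+n, j}`. -/
inductive WeylRel (R : Type*) [CommRing R] (n : ℕ) :
    FreeAlgebra R (Fin (2 * n)) → FreeAlgebra R (Fin (2 * n)) → Prop
  | comm (i j : Fin (2 * n)) (hij : (i : ℕ) < (j : ℕ)) :
      WeylRel R n (FreeAlgebra.ι R i * FreeAlgebra.ι R j)
        (FreeAlgebra.ι R j * FreeAlgebra.ι R i
          + (if (i : ℕ) + n = (j : ℕ) then 1 else 0))

/-- The `n`-th Weyl (Dirac quantum) algebra over `R`. -/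
abbrev WeylAlgebra (R : Type*) [CommRing R] (n : ℕ) := RingQuot (WeylRel R n)

/-- The canonical generators `Y_1, ..., Y_{2n}` of the Weyl algebra. -/
noncomputable def weylGen (R : Type*) [CommRing R] (n : ℕ) (i : Fin (2 * n)) :
    WeylAlgebra R n :=
  RingQuot.mkAlgHom R (WeylRel R n) (FreeAlgebra.ι R i)

/-- The degree filtration of the Weyl algebra: `weylFil R n d` is the `R`-submodule
spanned by products of at most `d` generators. -/
noncomputable def weylFil (R : Type*) [CommRing R] (n : ℕ) (d : ℕ) :
    Submodule R (WeylAlgebra R n) :=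
  Submodule.span R {x | ∃ l : List (Fin (2 * n)), l.length ≤ d ∧
    x = (l.map (weylGen R n)).prod}

/-- The total degree of an element of the Weyl algebra with respect to the
generators `Y_1, ..., Y_{2n}`. -/
noncomputable def weylDeg {R : Type*} [CommRing R] {n : ℕ} (a : WeylAlgebra R n) : ℕ :=
  sInf {d : ℕ | a ∈ weylFil R n d}

/-- The degree of an algebra endomorphism of the Weyl algebra. -/
noncomputable def weylDegHom {R : Type*} [CommRing R] {n : ℕ}
    (φ : WeylAlgebra R n →ₐ[R] WeylAlgebra R n) : ℕ :=
  Finset.univ.sup fun i : Fin (2 * n) => weylDeg (φ (weylGen R n i))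


section NDCAux

open Polynomial

variable {K : Type*} [CommRing K]

/-- Generic lift out of the first Weyl algebra. -/
noncomputable def weylLift {B : Type*} [Ring B] [Algebra K B]
    (u v : B) (h : u * v = v * u + 1) : WeylAlgebra K 1 →ₐ[K] B :=
  RingQuot.liftAlgHom K (s := WeylRel K 1)
    ⟨FreeAlgebra.lift K (fun i => if (i : ℕ) = 0 then u else v), by
      rintro x y ⟨i, j, hij⟩
      fin_cases i <;> fin_cases j <;> simp_all [h]⟩

lemma weylLift_gen {B : Type*} [Ring B] [Algebra K B]
    (u v : B) (h : u * v = v * u + 1) (i : Fin (2 * 1)) :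
    weylLift u v h (weylGen K 1 i) = if (i : ℕ) = 0 then u else v := by
  rw [weylGen, weylLift, RingQuot.liftAlgHom_mkAlgHom_apply, FreeAlgebra.lift_ι_apply]

lemma weyl_pow_comm {B : Type*} [Ring B] {u v : B} (h : u * v = v * u + 1) :
    ∀ n : ℕ, u ^ (n + 1) * v = v * u ^ (n + 1) + (n + 1 : ℕ) * u ^ n := by
  intro n
  induction n with
  | zero => simpa using h
  | succ n ih =>
    have : u ^ (n + 2) * v = u * (u ^ (n + 1) * v) := by
      rw [← mul_assoc, ← pow_succ']
    have hc : u * ((n + 1 : ℕ) * u ^ n) = (n + 1 : ℕ) * u ^ (n + 1) := by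
      rw [← mul_assoc, ← (Nat.cast_commute (n + 1 : ℕ) u).eq, mul_assoc, ← pow_succ']
    rw [this, ih, mul_add, ← mul_assoc, h, hc, add_mul, one_mul, mul_assoc v, ← pow_succ']
    have hcast : ((n + 1 + 1 : ℕ) : B) = ((n + 1 : ℕ) : B) + 1 := by push_cast; ring
    rw [hcast, add_mul, one_mul]
    abel

/-- The stabilizer of a subalgebra inside the endomorphism algebra. -/
noncomputable def endStab {M : Type*} [Ring M] [Algebra K M]
    (T : Subalgebra K M) : Subalgebra K (Module.End K M) where
  carrier := {A | ∀ f ∈ T, A f ∈ T}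
  mul_mem' := fun {a b} ha hb f hf => ha _ (hb _ hf)
  one_mem' := fun f hf => hf
  add_mem' := fun {a b} ha hb f hf => by
    simpa using add_mem (ha f hf) (hb f hf)
  zero_mem' := fun f hf => by simpa using T.zero_mem
  algebraMap_mem' := fun c f hf => by
    simpa [Module.algebraMap_end_apply] using T.smul_mem hf c

end NDCAux

section NDCField

open Polynomial

variable {K : Type*} [Field K] (p : ℕ) [hp : Fact p.Prime] [CharP K p]

lemma ndc_X_not_mem :
    (X : K[X]) ∉ Algebra.adjoin K {X - X ^ p} := by
  intro hmem
  rw [Algebra.adjoin_singleton_eq_range_aeval] at hmem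
  obtain ⟨g, hg'⟩ := hmem
  have hg : (aeval (X - X ^ p : K[X])) g = X := hg'
  have hcomp : (aeval (X - X ^ p : K[X])) g = g.comp (X - X ^ p) := by
    rw [aeval_def, comp, Polynomial.algebraMap_eq]
  have hdegw : (X - X ^ p : K[X]).natDegree = p := by
    have h1 : (1 : ℕ) < p := hp.out.one_lt
    have : (X - X ^ p : K[X]) = -(X ^ p - X) := by ring
    rw [this, natDegree_neg, natDegree_sub_eq_left_of_natDegree_lt]
    · exact natDegree_X_pow p
    · simpa [natDegree_X_pow] using h1
  have := congrArg natDegree hg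
  rw [hcomp, natDegree_comp, hdegw, natDegree_X] at this
  have hd : p ∣ 1 := Dvd.intro_left _ this
  have := Nat.le_of_dvd one_pos hd
  have := hp.out.one_lt
  omega

omit hp in
lemma ndc_deriv_mem {f : K[X]}
    (hf : f ∈ Algebra.adjoin K {X - X ^ p}) :
    derivative f ∈ Algebra.adjoin K {X - X ^ p} := by
  induction hf using Algebra.adjoin_induction with
  | mem x hx =>
    rcases hx with rfl
    have : derivative ((X : K[X]) - X ^ p) = 1 := by
      simp [derivative_X_pow, CharP.cast_eq_zero K p]
    rw [this]
    exact one_mem _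
  | algebraMap r =>
    rw [Polynomial.algebraMap_eq, derivative_C]
    exact zero_mem _
  | add x y hx hy ihx ihy => rw [derivative_add]; exact add_mem ihx ihy
  | mul x y hx hy ihx ihy =>
    rw [derivative_mul]
    exact add_mem (mul_mem ihx hy) (mul_mem hx ihy)

end NDCField

/-- over a field of characteristic `p > 0`, the assignment
`Y_1 ↦ Y_1 − Y_1^p`, `Y_2 ↦ Y_2` defines a `K`-algebra endomorphism of the first
Weyl algebra `A_1(K)` (the images satisfy the defining commutation relation), but
no such endomorphism is an automorphism. -/
theorem naive_dixmier_conjecture_counterexample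
    {K : Type*} [Field K] (p : ℕ) [Fact p.Prime] [CharP K p] :
    (let Y₁ : WeylAlgebra K 1 := weylGen K 1 ⟨0, by norm_num⟩
     let Y₂ : WeylAlgebra K 1 := weylGen K 1 ⟨1, by norm_num⟩
     ((Y₁ - Y₁ ^ p) * Y₂ - Y₂ * (Y₁ - Y₁ ^ p) = 1)
     ∧ (∃ φ : WeylAlgebra K 1 →ₐ[K] WeylAlgebra K 1,
          φ Y₁ = Y₁ - Y₁ ^ p ∧ φ Y₂ = Y₂)
     ∧ ∀ φ : WeylAlgebra K 1 →ₐ[K] WeylAlgebra K 1,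
          φ Y₁ = Y₁ - Y₁ ^ p → φ Y₂ = Y₂ → ¬ Function.Bijective φ) := by
  intro Y₁ Y₂
  have hrel : Y₁ * Y₂ = Y₂ * Y₁ + 1 := by
    have := RingQuot.mkAlgHom_rel K
      (WeylRel.comm (R := K) (n := 1) ⟨0, by norm_num⟩ ⟨1, by norm_num⟩ (by norm_num))
    simpa [Y₁, Y₂, weylGen, map_add, map_mul, map_one] using this
  -- the characteristic p fact in the Weyl algebra
  have hcharW : ((p : ℕ) : WeylAlgebra K 1) = 0 := by
    have : ((p : ℕ) : WeylAlgebra K 1) = algebraMap K _ ((p : ℕ) : K) := by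
      rw [map_natCast]
    rw [this, CharP.cast_eq_zero K p, map_zero]
  obtain ⟨m, hm⟩ : ∃ m, p = m + 1 := ⟨p - 1, by have := Nat.Prime.one_lt (Fact.out (p := p.Prime)); omega⟩
  have hpowcomm : Y₁ ^ p * Y₂ = Y₂ * Y₁ ^ p := by
    have := weyl_pow_comm hrel m
    rw [← hm] at this
    rw [this]
    rw [hm] at hcharW ⊢
    rw [hcharW, zero_mul, add_zero]
  have hkey : (Y₁ - Y₁ ^ p) * Y₂ - Y₂ * (Y₁ - Y₁ ^ p) = 1 := by
    rw [sub_mul, mul_sub, hrel, hpowcomm]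
    abel
  have hkey' : (Y₁ - Y₁ ^ p) * Y₂ = Y₂ * (Y₁ - Y₁ ^ p) + 1 := by
    rw [← hkey]; abel
  refine ⟨hkey, ⟨weylLift (Y₁ - Y₁ ^ p) Y₂ hkey', ?_, ?_⟩, ?_⟩
  · simpa [Y₁, Y₂] using weylLift_gen (Y₁ - Y₁ ^ p) Y₂ hkey' ⟨0, by norm_num⟩
  · simpa [Y₁, Y₂] using weylLift_gen (Y₁ - Y₁ ^ p) Y₂ hkey' ⟨1, by norm_num⟩
  · intro φ hφ1 hφ2 hbij
    classical
    -- the representation on K[X]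
    set u : Module.End K (Polynomial K) := LinearMap.mulLeft K (Polynomial.X) with hu
    set v : Module.End K (Polynomial K) := -(Polynomial.derivative (R := K)) with hv
    have huv : u * v = v * u + 1 := by
      refine LinearMap.ext fun f => ?_
      simp only [hu, hv, LinearMap.add_apply, Module.End.mul_apply, LinearMap.neg_apply,
        LinearMap.mulLeft_apply, Module.End.one_apply, Polynomial.derivative_mul,
        Polynomial.derivative_X, one_mul, map_neg]
      ring
    set ρ : WeylAlgebra K 1 →ₐ[K] Module.End K (Polynomial K) := weylLift u v huv with hρ
    have hρ1 : ρ Y₁ = u := by simpa [ρ, Y₁] using weylLift_gen u v huv ⟨0, by norm_num⟩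
    have hρ2 : ρ Y₂ = v := by simpa [ρ, Y₂] using weylLift_gen u v huv ⟨1, by norm_num⟩
    set T : Subalgebra K (Polynomial K) :=
      Algebra.adjoin K {Polynomial.X - Polynomial.X ^ p} with hT
    set S : Subalgebra K (Module.End K (Polynomial K)) := endStab T with hS
    set ψ : WeylAlgebra K 1 →ₐ[K] Module.End K (Polynomial K) := ρ.comp φ with hψ
    -- the two generators map into S under ψ
    have hSu : ψ Y₁ ∈ S := by
      rw [hψ, AlgHom.comp_apply, hφ1, map_sub, map_pow, hρ1]
      intro f hf
      have : (u - u ^ p) f = (Polynomial.X - Polynomial.X ^ p) * f := by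
        simp [hu, LinearMap.sub_apply, LinearMap.pow_mulLeft, LinearMap.mulLeft_apply, sub_mul]
      rw [this]
      exact mul_mem (Algebra.self_mem_adjoin_singleton K _) hf
    have hSv : ψ Y₂ ∈ S := by
      rw [hψ, AlgHom.comp_apply, hφ2, hρ2]
      intro f hf
      have : v f = -(Polynomial.derivative f) := rfl
      rw [this]
      exact neg_mem (ndc_deriv_mem p hf)
    have hall : ∀ x : WeylAlgebra K 1, ψ x ∈ S := by
      intro x
      obtain ⟨y, rfl⟩ := RingQuot.mkAlgHom_surjective K (WeylRel K 1) x
      induction y using FreeAlgebra.induction with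
      | grade0 r =>
        rw [AlgHom.commutes, AlgHom.commutes]
        exact S.algebraMap_mem r
      | grade1 i =>
        have : (RingQuot.mkAlgHom K (WeylRel K 1)) (FreeAlgebra.ι K i) = weylGen K 1 i := rfl
        rw [this]
        fin_cases i
        · exact hSu
        · exact hSv
      | mul a b ha hb => rw [map_mul, map_mul]; exact mul_mem ha hb
      | add a b ha hb => rw [map_add, map_add]; exact add_mem ha hb
    obtain ⟨a, ha⟩ := hbij.2 Y₁
    have hXmem : (Polynomial.X : Polynomial K) ∈ T := by
      have h1 : ψ a ∈ S := hall a
      have h2 : ψ a = u := by rw [hψ, AlgHom.comp_apply, ha, hρ1]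
      rw [h2] at h1
      have := h1 1 (one_mem T)
      simpa [hu, LinearMap.mulLeft_apply] using this
    exact ndc_X_not_mem p hXmem
end

section
/- Let K be a field of characteristic zero. The first Weyl algebra A_1(K) is simple: it contains no two-sided ideal other than 0 and the whole algebra. -/
set_option linter.unusedSectionVars false

noncomputable section
namespace WeylSimple
variable {K : Type*} [Field K] [CharZero K]

local notation "A" => WeylAlgebra K 1

def P : A := weylGen K 1 ⟨0, by omega⟩
def X : A := weylGen K 1 ⟨1, by omega⟩

lemma rel : (P : A) * X = X * P + 1 := by
  have h := RingQuot.mkAlgHom_rel K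
    (WeylRel.comm (R := K) (n := 1) ⟨0, by omega⟩ ⟨1, by omega⟩ (by norm_num))
  simp only [map_mul, map_add, map_one] at h
  simpa [P, X, weylGen] using h

lemma P_mul_Xpow (i : ℕ) : (P : A) * X ^ i = X ^ i * P + (i : K) • X ^ (i - 1) := by
  induction i with
  | zero => simp
  | succ k ih =>
    calc (P : A) * X ^ (k + 1) = (X * P + 1) * X ^ k := by
          rw [pow_succ' (M := A), ← mul_assoc, rel]
    _ = X * (P * X ^ k) + X ^ k := by noncomm_ring
    _ = X * (X ^ k * P + (k : K) • X ^ (k - 1)) + X ^ k := by rw [ih]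
    _ = X ^ (k + 1) * P + ((k : K) • (X * X ^ (k - 1)) + X ^ k) := by
        rw [pow_succ' (M := A)]; noncomm_ring
    _ = X ^ (k + 1) * P + ((k : K) + 1) • X ^ k := by
        congr 1
        rcases Nat.eq_zero_or_pos k with hk | hk
        · subst hk; simp
        · have h1 : k - 1 + 1 = k := by omega
          rw [← pow_succ' (M := A), h1, add_smul, one_smul]
    _ = X ^ (k + 1) * P + ((k + 1 : ℕ) : K) • X ^ (k + 1 - 1) := by push_cast; simp

lemma X_mul_Ppow (j : ℕ) : (X : A) * P ^ j = P ^ j * X - (j : K) • P ^ (j - 1) := by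
  induction j with
  | zero => simp
  | succ k ih =>
    calc (X : A) * P ^ (k + 1) = (X * P) * P ^ k := by
          rw [pow_succ' (M := A), mul_assoc]
    _ = (P * X - 1) * P ^ k := by
          rw [show (X : A) * P = P * X - 1 from by rw [eq_sub_iff_add_eq]; exact rel.symm]
    _ = P * (X * P ^ k) - P ^ k := by rw [sub_mul, one_mul, mul_assoc]
    _ = P * (P ^ k * X - (k : K) • P ^ (k - 1)) - P ^ k := by rw [ih]
    _ = P ^ (k + 1) * X - ((k : K) • (P * P ^ (k - 1)) + P ^ k) := by
        rw [pow_succ' (M := A), mul_sub, ← mul_assoc, mul_smul_comm]; abel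
    _ = P ^ (k + 1) * X - ((k : K) + 1) • P ^ k := by
        congr 1
        rcases Nat.eq_zero_or_pos k with hk | hk
        · subst hk; simp
        · have h1 : k - 1 + 1 = k := by omega
          rw [← pow_succ' (M := A), h1, add_smul, one_smul]
    _ = P ^ (k + 1) * X - ((k + 1 : ℕ) : K) • P ^ (k + 1 - 1) := by push_cast; simp

def adP : Module.End K A := LinearMap.mulLeft K P - LinearMap.mulRight K P
def adX : Module.End K A := LinearMap.mulLeft K X - LinearMap.mulRight K X

lemma adP_apply (a : A) : adP a = P * a - a * P := rfl
lemma adX_apply (a : A) : adX a = X * a - a * X := rfl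

lemma adP_monomial (i j : ℕ) :
    adP (X ^ i * P ^ j : A) = (i : K) • (X ^ (i - 1) * P ^ j) := by
  rw [adP_apply]
  have h2 : (X ^ i * P ^ j : A) * P = X ^ i * P * P ^ j := by
    rw [mul_assoc, mul_assoc, ← pow_succ (M := A), ← pow_succ' (M := A)]
  rw [h2, ← mul_assoc, P_mul_Xpow]
  noncomm_ring

lemma adX_monomial (i j : ℕ) :
    adX (X ^ i * P ^ j : A) = (-(j : K)) • (X ^ i * P ^ (j - 1)) := by
  rw [adX_apply]
  have h1 : (X : A) * (X ^ i * P ^ j) = X ^ i * (X * P ^ j) := by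
    rw [← mul_assoc, ← pow_succ' (M := A), pow_succ (M := A), mul_assoc]
  rw [h1, X_mul_Ppow, mul_sub, ← mul_assoc, mul_smul_comm, sub_sub_cancel_left]
  exact (neg_smul (j : K) (X ^ i * P ^ (j - 1) : A)).symm

lemma adP_pow_monomial (M i j : ℕ) :
    (adP ^ M) (X ^ i * P ^ j : A) =
      ((i.descFactorial M : K)) • (X ^ (i - M) * P ^ j) := by
  induction M with
  | zero => simp
  | succ m ih =>
    rw [pow_succ' (M := Module.End K A), Module.End.mul_apply, ih, map_smul, adP_monomial,
      smul_smul, Nat.descFactorial_succ]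
    have e1 : i - m - 1 = i - (m + 1) := by omega
    rw [e1, Nat.cast_mul]
    congr 1
    ring

lemma adX_pow_monomial (J i j : ℕ) :
    (adX ^ J) (X ^ i * P ^ j : A) =
      (((-1 : K) ^ J * (j.descFactorial J : K))) • (X ^ i * P ^ (j - J)) := by
  induction J with
  | zero => simp
  | succ m ih =>
    rw [pow_succ' (M := Module.End K A), Module.End.mul_apply, ih, map_smul, adX_monomial,
      smul_smul, Nat.descFactorial_succ]
    have e1 : j - m - 1 = j - (m + 1) := by omega
    rw [e1]
    congr 1
    push_cast
    ring


def v (q : ℕ × ℕ) : A := X ^ q.1 * P ^ q.2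

def T : Submodule K A := Submodule.span K (Set.range v)

lemma v_mem (q : ℕ × ℕ) : v q ∈ (T : Submodule K A) :=
  Submodule.subset_span ⟨q, rfl⟩

lemma one_mem_T : (1 : A) ∈ (T : Submodule K A) := by
  have : v (0, 0) = (1 : A) := by simp [v]
  rw [← this]; exact v_mem _

lemma Ppow_mul_X (j : ℕ) :
    (P : A) ^ j * X = X * P ^ j + (j : K) • P ^ (j - 1) := by
  rw [X_mul_Ppow]; abel

lemma v_mul_X (i j : ℕ) : (X ^ i * P ^ j : A) * X
    = X ^ (i + 1) * P ^ j + (j : K) • (X ^ i * P ^ (j - 1)) := by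
  rw [mul_assoc, Ppow_mul_X, mul_add, ← mul_assoc, ← pow_succ (M := A), mul_smul_comm]

lemma mul_X_mem {a : A} (ha : a ∈ (T : Submodule K A)) : a * X ∈ (T : Submodule K A) := by
  induction ha using Submodule.span_induction with
  | mem x hx =>
    obtain ⟨⟨i, j⟩, rfl⟩ := hx
    show (X ^ i * P ^ j : A) * X ∈ _
    rw [v_mul_X]
    exact T.add_mem (v_mem (i + 1, j)) (T.smul_mem _ (v_mem (i, j - 1)))
  | zero => simpa using T.zero_mem
  | add x y hx hy ihx ihy => rw [add_mul]; exact T.add_mem ihx ihy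
  | smul r x hx ih => rw [smul_mul_assoc]; exact T.smul_mem _ ih

lemma mul_P_mem {a : A} (ha : a ∈ (T : Submodule K A)) : a * P ∈ (T : Submodule K A) := by
  induction ha using Submodule.span_induction with
  | mem x hx =>
    obtain ⟨⟨i, j⟩, rfl⟩ := hx
    show (X ^ i * P ^ j : A) * P ∈ _
    rw [mul_assoc, ← pow_succ (M := A)]
    exact v_mem (i, j + 1)
  | zero => simpa using T.zero_mem
  | add x y hx hy ihx ihy => rw [add_mul]; exact T.add_mem ihx ihy
  | smul r x hx ih => rw [smul_mul_assoc]; exact T.smul_mem _ ih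

lemma mul_v_mem {a : A} (ha : a ∈ (T : Submodule K A)) (q : ℕ × ℕ) :
    a * v q ∈ (T : Submodule K A) := by
  obtain ⟨i, j⟩ := q
  show a * (X ^ i * P ^ j) ∈ _
  rw [← mul_assoc]
  have hX : a * X ^ i ∈ (T : Submodule K A) := by
    induction i with
    | zero => simpa using ha
    | succ k ih => rw [pow_succ (M := A), ← mul_assoc]; exact mul_X_mem ih
  induction j with
  | zero => simpa using hX
  | succ k ih => rw [pow_succ (M := A), ← mul_assoc]; exact mul_P_mem ih

lemma mul_mem_T {a b : A} (ha : a ∈ (T : Submodule K A)) (hb : b ∈ (T : Submodule K A)) :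
    a * b ∈ (T : Submodule K A) := by
  induction hb using Submodule.span_induction with
  | mem x hx => obtain ⟨q, rfl⟩ := hx; exact mul_v_mem ha q
  | zero => simpa using T.zero_mem
  | add x y hx hy ihx ihy => rw [mul_add]; exact T.add_mem ihx ihy
  | smul r x hx ih => rw [mul_smul_comm]; exact T.smul_mem _ ih

lemma mem_T (a : A) : a ∈ (T : Submodule K A) := by
  obtain ⟨f, rfl⟩ := RingQuot.mkAlgHom_surjective K (WeylRel K 1) a
  induction f using FreeAlgebra.induction with
  | grade0 r =>
    rw [AlgHom.commutes, Algebra.algebraMap_eq_smul_one]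
    exact T.smul_mem _ one_mem_T
  | grade1 i =>
    have h2 : (i : ℕ) < 2 := by omega
    interval_cases h : (i : ℕ)
    · have : i = ⟨0, by omega⟩ := by ext; exact h
      rw [this]
      have : RingQuot.mkAlgHom K (WeylRel K 1) (FreeAlgebra.ι K ⟨0, by omega⟩) = P := rfl
      rw [this]
      have : (P : A) = v (0, 1) := by simp [v]
      rw [this]; exact v_mem _
    · have : i = ⟨1, by omega⟩ := by ext; exact h
      rw [this]
      have : RingQuot.mkAlgHom K (WeylRel K 1) (FreeAlgebra.ι K ⟨1, by omega⟩) = X := rfl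
      rw [this]
      have : (X : A) = v (1, 0) := by simp [v]
      rw [this]; exact v_mem _
  | mul a b ha hb => rw [map_mul]; exact mul_mem_T ha hb
  | add a b ha hb => rw [map_add]; exact T.add_mem ha hb

lemma adPX_v (Mn Jn i j : ℕ) : (adX ^ Jn) ((adP ^ Mn) (v (i, j) : A)) =
    ((-1 : K) ^ Jn * (j.descFactorial Jn : K) * (i.descFactorial Mn : K)) • v (i - Mn, j - Jn) := by
  show (adX ^ Jn) ((adP ^ Mn) (X ^ i * P ^ j)) = _ • (X ^ (i - Mn) * P ^ (j - Jn))
  rw [adP_pow_monomial, map_smul, adX_pow_monomial, smul_smul]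
  congr 1
  ring

lemma adP_pow_mem (I : TwoSidedIdeal A) {a : A} (ha : a ∈ I) (n : ℕ) :
    (adP ^ n) a ∈ I := by
  induction n with
  | zero => simpa using ha
  | succ m ih =>
    rw [pow_succ' (M := Module.End K A), Module.End.mul_apply, adP_apply]
    exact I.sub_mem (I.mul_mem_left _ _ ih) (I.mul_mem_right _ _ ih)

lemma adX_pow_mem (I : TwoSidedIdeal A) {a : A} (ha : a ∈ I) (n : ℕ) :
    (adX ^ n) a ∈ I := by
  induction n with
  | zero => simpa using ha
  | succ m ih =>
    rw [pow_succ' (M := Module.End K A), Module.End.mul_apply, adX_apply]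
    exact I.sub_mem (I.mul_mem_left _ _ ih) (I.mul_mem_right _ _ ih)

theorem simple (I : TwoSidedIdeal (WeylAlgebra K 1)) : I = ⊥ ∨ I = ⊤ := by
  by_cases hbot : I = ⊥
  · exact Or.inl hbot
  right
  have hex : ∃ a : A, a ∈ I ∧ a ≠ 0 := by
    by_contra h
    push_neg at h
    refine hbot (SetLike.ext fun x => ⟨fun hx => (TwoSidedIdeal.mem_bot _).2 (h x hx), fun hx => ?_⟩)
    rw [TwoSidedIdeal.mem_bot _] at hx
    subst hx
    exact I.zero_mem
  obtain ⟨a, haI, ha0⟩ := hex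
  have hmem := mem_T a
  rw [T, Finsupp.mem_span_range_iff_exists_finsupp] at hmem
  obtain ⟨c, hc⟩ := hmem
  have hcne : c ≠ 0 := by
    rintro rfl
    simp at hc
    exact ha0 hc.symm
  have hsupp : c.support.Nonempty := Finsupp.support_nonempty_iff.2 hcne
  set M := (c.support.image Prod.fst).max' (hsupp.image _) with hM
  have hfilne : ((c.support.filter (fun q => q.1 = M)).image Prod.snd).Nonempty := by
    have : M ∈ c.support.image Prod.fst := Finset.max'_mem _ _
    obtain ⟨q, hq, hq1⟩ := Finset.mem_image.1 this
    exact ⟨q.2, Finset.mem_image.2 ⟨q, Finset.mem_filter.2 ⟨hq, hq1⟩, rfl⟩⟩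
  set J := ((c.support.filter (fun q => q.1 = M)).image Prod.snd).max' hfilne with hJ
  have hMJ : (M, J) ∈ c.support := by
    have : J ∈ (c.support.filter (fun q => q.1 = M)).image Prod.snd := Finset.max'_mem _ _
    obtain ⟨q, hq, hq2⟩ := Finset.mem_image.1 this
    obtain ⟨hqs, hq1⟩ := Finset.mem_filter.1 hq
    have : q = (M, J) := Prod.ext hq1 hq2
    rwa [← this]
  have hle1 : ∀ q ∈ c.support, q.1 ≤ M :=
    fun q hq => Finset.le_max' _ _ (Finset.mem_image.2 ⟨q, hq, rfl⟩)
  have hle2 : ∀ q ∈ c.support, q.1 = M → q.2 ≤ J := fun q hq h1 =>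
    Finset.le_max' _ _ (Finset.mem_image.2 ⟨q, Finset.mem_filter.2 ⟨hq, h1⟩, rfl⟩)
  set b : A := (adX ^ J) ((adP ^ M) a) with hbdef
  have hbI : b ∈ I := adX_pow_mem I (adP_pow_mem I haI M) J
  set κ : K := c (M, J) * ((-1 : K) ^ J * (J.descFactorial J : K) * (M.descFactorial M : K)) with hκ
  have hb : b = κ • 1 := by
    rw [hbdef, ← hc, map_finsuppSum, map_finsuppSum, Finsupp.sum]
    rw [Finset.sum_eq_single (M, J)]
    · rw [map_smul, map_smul]
      have := adPX_v (K := K) M J M J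
      rw [show ((M, J) : ℕ × ℕ) = ((M : ℕ), (J : ℕ)) from rfl, this]
      rw [smul_smul, hκ]
      congr 1
      simp [v]
    · intro q hq hne
      rw [map_smul, map_smul, show q = (q.1, q.2) from rfl, adPX_v]
      rcases lt_or_eq_of_le (hle1 q hq) with h1 | h1
      · rw [Nat.descFactorial_eq_zero_iff_lt.2 h1]
        simp
      · have h2 : q.2 < J := by
          rcases lt_or_eq_of_le (hle2 q hq h1) with h2 | h2
          · exact h2
          · exact absurd (Prod.ext h1 h2) hne
        rw [Nat.descFactorial_eq_zero_iff_lt.2 h2]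
        simp
    · intro h
      exact absurd hMJ h
  have hκne : κ ≠ 0 := by
    rw [hκ]
    refine mul_ne_zero (Finsupp.mem_support_iff.1 hMJ) (mul_ne_zero (mul_ne_zero ?_ ?_) ?_)
    · exact pow_ne_zero _ (neg_ne_zero.2 one_ne_zero)
    · exact_mod_cast Nat.cast_ne_zero.2 (by rw [Nat.descFactorial_self]; exact Nat.factorial_ne_zero J)
    · exact_mod_cast Nat.cast_ne_zero.2 (by rw [Nat.descFactorial_self]; exact Nat.factorial_ne_zero M)
  have hone : (1 : A) ∈ I := by
    have h1 : κ⁻¹ • b ∈ I := by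
      rw [Algebra.smul_def]
      exact I.mul_mem_left _ _ hbI
    rwa [hb, smul_smul, inv_mul_cancel₀ hκne, one_smul] at h1
  rw [eq_top_iff]
  intro z _
  simpa using I.mul_mem_left z 1 hone

end WeylSimple

/-- over a field of characteristic zero, the first Weyl algebra
`A_1(K)` is simple: its only two-sided ideals are `0` and the whole algebra. -/
theorem weyl_algebra_simple_char_zero
    {K : Type*} [Field K] [CharZero K]
    (I : TwoSidedIdeal (WeylAlgebra K 1)) :
    I = ⊥ ∨ I = ⊤ := by
  exact WeylSimple.simple I
end
end
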